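/- arXiv:2503.19166 — 4 statements merged into one kernel-verified Lean document; each statement's English description precedes it below -/
import Mathlib

section
/- For the bi-objective problem LOZJ with f1 = LeadingOnes and f2 = ZeroJump_k on bit-strings of length n, where k is an integer with 1 < k < n/2, the set of non-global Pareto local optima equals exactly the set of bit-strings x with LeadingOnes(x) < k and |x|_0 = n − k. -/
open Finset

/-- Number of one-bits of a bit-string. -/
def onesCount {n : ℕ} (x : Fin n → Bool) : ℕ :=
  (Finset.univ.filter fun i => x i = true).card

/-- Number of zero-bits of a bit-string. -/
def zerosCount {n : ℕ} (x : Fin n → Bool) : ℕ :=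
  (Finset.univ.filter fun i => x i = false).card

/-- Number of leading one-bits. -/
def leadingOnes {n : ℕ} (x : Fin n → Bool) : ℕ :=
  (Finset.univ.filter fun i : Fin n => ∀ j : Fin n, j ≤ i → x j = true).card

/-- Number of trailing zero-bits. -/
def trailingZeroes {n : ℕ} (x : Fin n → Bool) : ℕ :=
  (Finset.univ.filter fun i : Fin n => ∀ j : Fin n, i ≤ j → x j = false).card

/-- `y` dominates `x` for the bi-objective maximisation problem `(f1, f2)`. -/
def dominates {n : ℕ} (f1 f2 : (Fin n → Bool) → ℕ) (y x : Fin n → Bool) : Prop :=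
  f1 x ≤ f1 y ∧ f2 x ≤ f2 y ∧ (f1 x < f1 y ∨ f2 x < f2 y)

/-- `x` is Pareto optimal: no solution dominates it. -/
def paretoOptimal {n : ℕ} (f1 f2 : (Fin n → Bool) → ℕ) (x : Fin n → Bool) : Prop :=
  ∀ y, ¬ dominates f1 f2 y x

/-- `x` is a non-global Pareto local optimum: not Pareto optimal, and not dominated by
any bit-string at Hamming distance exactly 1. -/
def nonGlobalParetoLocalOpt {n : ℕ} (f1 f2 : (Fin n → Bool) → ℕ) (x : Fin n → Bool) : Prop :=
  ¬ paretoOptimal f1 f2 x ∧ ∀ y, hammingDist y x = 1 → ¬ dominates f1 f2 y x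

/-- The ZeroJump function with jump parameter `k`. -/
def zeroJump (n k : ℕ) (x : Fin n → Bool) : ℕ :=
  if zerosCount x ≤ n - k ∨ x = (fun _ => false) then k + zerosCount x else n - zerosCount x

/-- The OneJump function with jump parameter `k`. -/
def oneJump (n k : ℕ) (x : Fin n → Bool) : ℕ :=
  if onesCount x ≤ n - k ∨ x = (fun _ => true) then k + onesCount x else n - onesCount x

/-- Block `j` (0-indexed) of the bit-string `x` (with `b` blocks of length `ℓ`) is all-ones. -/
def blockAllOnes (b ℓ : ℕ) (x : Fin (b * ℓ) → Bool) (j : Fin b) : Prop :=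
  ∀ i : Fin (b * ℓ), (i : ℕ) / ℓ = (j : ℕ) → x i = true

/-- Block `j` (0-indexed) of the bit-string `x` is all-zeros. -/
def blockAllZeros (b ℓ : ℕ) (x : Fin (b * ℓ) → Bool) (j : Fin b) : Prop :=
  ∀ i : Fin (b * ℓ), (i : ℕ) / ℓ = (j : ℕ) → x i = false

instance (b ℓ : ℕ) (x : Fin (b * ℓ) → Bool) (j : Fin b) : Decidable (blockAllOnes b ℓ x j) := by
  unfold blockAllOnes; infer_instance

instance (b ℓ : ℕ) (x : Fin (b * ℓ) → Bool) (j : Fin b) : Decidable (blockAllZeros b ℓ x j) := by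
  unfold blockAllZeros; infer_instance

/-- OneRoyalRoad: `ℓ` times the number of all-ones blocks. -/
def oneRoyalRoad (b ℓ : ℕ) (x : Fin (b * ℓ) → Bool) : ℕ :=
  ℓ * (Finset.univ.filter fun j : Fin b => blockAllOnes b ℓ x j).card

/-- ZeroRoyalRoad: `ℓ` times the number of all-zeros blocks. -/
def zeroRoyalRoad (b ℓ : ℕ) (x : Fin (b * ℓ) → Bool) : ℕ :=
  ℓ * (Finset.univ.filter fun j : Fin b => blockAllZeros b ℓ x j).card

/-- Number of one-bits in block `j` of `x`. -/
def blockOnes (b ℓ : ℕ) (x : Fin (b * ℓ) → Bool) (j : Fin b) : ℕ :=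
  (Finset.univ.filter fun i : Fin (b * ℓ) => (i : ℕ) / ℓ = (j : ℕ) ∧ x i = true).card

/-- Number of zero-bits in block `j` of `x`. -/
def blockZeros (b ℓ : ℕ) (x : Fin (b * ℓ) → Bool) (j : Fin b) : ℕ :=
  (Finset.univ.filter fun i : Fin (b * ℓ) => (i : ℕ) / ℓ = (j : ℕ) ∧ x i = false).card

section helpers
variable {n : ℕ}

lemma ones_add_zeros (x : Fin n → Bool) : onesCount x + zerosCount x = n := by
  have h := Finset.card_filter_add_card_filter_not (s := (univ : Finset (Fin n)))
    (p := fun i => x i = true)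
  simpa [onesCount, zerosCount] using h

lemma zeros_le (x : Fin n → Bool) : zerosCount x ≤ n := by
  have := ones_add_zeros x; omega

lemma zeros_eq_n_iff (x : Fin n → Bool) : zerosCount x = n ↔ x = (fun _ => false) := by
  constructor
  · intro h
    have hu : (univ.filter fun j => x j = false) = univ :=
      Finset.eq_univ_of_card _ (by simpa [zerosCount] using h)
    funext i
    have := Finset.mem_univ i
    rw [← hu, Finset.mem_filter] at this
    exact this.2
  · intro h; subst h; simp [zerosCount]

lemma zeroJump_eq (k : ℕ) (x : Fin n → Bool) :
    zeroJump n k x =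
      if zerosCount x ≤ n - k ∨ zerosCount x = n then k + zerosCount x else n - zerosCount x := by
  unfold zeroJump
  by_cases h : zerosCount x = n
  · rw [if_pos (Or.inr h), if_pos (Or.inr ((zeros_eq_n_iff x).mp h))]
  · by_cases h2 : zerosCount x ≤ n - k
    · rw [if_pos (Or.inl h2), if_pos (Or.inl h2)]
    · rw [if_neg, if_neg]
      · rintro (h3 | h3); exact h2 h3; exact h h3
      · rintro (h3 | h3); exact h2 h3; exact h ((zeros_eq_n_iff x).mpr h3)

lemma mem_lead_iff (x : Fin n → Bool) (i : Fin n) :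
    (∀ j, j ≤ i → x j = true) ↔ (i : ℕ) < leadingOnes x := by
  constructor
  · intro h
    have hsub : Finset.Iic i ⊆ univ.filter (fun a : Fin n => ∀ j, j ≤ a → x j = true) := by
      intro a ha
      simp only [Finset.mem_Iic] at ha
      simp only [Finset.mem_filter, Finset.mem_univ, true_and]
      exact fun j hj => h j (le_trans hj ha)
    have := Finset.card_le_card hsub
    rw [Fin.card_Iic] at this
    exact lt_of_lt_of_le (Nat.lt_succ_self _) this
  · intro h
    by_contra hc
    have hsub : univ.filter (fun a : Fin n => ∀ j, j ≤ a → x j = true) ⊆ Finset.Iio i := by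
      intro a ha
      simp only [Finset.mem_filter, Finset.mem_univ, true_and] at ha
      simp only [Finset.mem_Iio]
      by_contra hia
      exact hc fun j hj => ha j (le_trans hj (le_of_not_gt hia))
    have := Finset.card_le_card hsub
    rw [Fin.card_Iio] at this
    exact absurd h (not_lt.mpr this)

lemma lead_true {x : Fin n → Bool} {i : Fin n} (h : (i : ℕ) < leadingOnes x) : x i = true :=
  ((mem_lead_iff x i).mpr h) i le_rfl

lemma lead_le_ones (x : Fin n → Bool) : leadingOnes x ≤ onesCount x := by
  apply Finset.card_le_card
  intro i hi
  simp only [Finset.mem_filter, Finset.mem_univ, true_and] at hi ⊢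
  exact hi i le_rfl

lemma lead_add_zeros_le (x : Fin n → Bool) : leadingOnes x + zerosCount x ≤ n := by
  have := lead_le_ones x; have := ones_add_zeros x; omega

lemma lead_mono {x y : Fin n → Bool} (h : ∀ i, x i = true → y i = true) :
    leadingOnes x ≤ leadingOnes y := by
  apply Finset.card_le_card
  intro i hi
  simp only [Finset.mem_filter, Finset.mem_univ, true_and] at hi ⊢
  exact fun j hj => h j (hi j hj)

lemma card_filter_lt (m : ℕ) (hm : m ≤ n) :
    (univ.filter fun i : Fin n => (i : ℕ) < m).card = m := by
  have himg : (univ.filter fun i : Fin n => (i : ℕ) < m)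
      = (univ : Finset (Fin m)).image (Fin.castLE hm) := by
    ext i
    simp only [Finset.mem_filter, Finset.mem_univ, true_and, Finset.mem_image]
    constructor
    · intro hi; exact ⟨⟨i, hi⟩, rfl⟩
    · rintro ⟨a, rfl⟩; exact a.isLt
  rw [himg, Finset.card_image_of_injective _ (Fin.castLE_injective hm)]
  simp

lemma ge_lead_of (x : Fin n → Bool) (m : ℕ) (hm : m ≤ n)
    (h : ∀ j : Fin n, (j : ℕ) < m → x j = true) : m ≤ leadingOnes x := by
  rw [← card_filter_lt m hm]
  apply Finset.card_le_card
  intro i hi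
  simp only [Finset.mem_filter, Finset.mem_univ, true_and] at hi ⊢
  exact fun j hj => h j (lt_of_le_of_lt hj hi)

lemma zeros_flip_up {x y : Fin n → Bool} {i : Fin n} (hx : x i = true) (hy : y i = false)
    (hag : ∀ j, j ≠ i → y j = x j) : zerosCount y = zerosCount x + 1 := by
  have hset : (univ.filter fun j => y j = false) = insert i (univ.filter fun j => x j = false) := by
    ext j
    simp only [Finset.mem_filter, Finset.mem_univ, true_and, Finset.mem_insert]
    by_cases hj : j = i
    · subst hj; simp [hy]
    · rw [hag j hj]; simp [hj]
  rw [zerosCount, hset, Finset.card_insert_of_notMem (by simp [hx])]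
  rfl

lemma zeros_flip_down {x y : Fin n → Bool} {i : Fin n} (hx : x i = false) (hy : y i = true)
    (hag : ∀ j, j ≠ i → y j = x j) : zerosCount y + 1 = zerosCount x := by
  have hag' : ∀ j, j ≠ i → x j = y j := fun j hj => (hag j hj).symm
  exact (zeros_flip_up hy hx hag').symm

lemma hd_one {x y : Fin n → Bool} {i : Fin n} (hne : y i ≠ x i)
    (hag : ∀ j, j ≠ i → y j = x j) : hammingDist y x = 1 := by
  have hset : (univ.filter fun j => y j ≠ x j) = {i} := by
    ext j
    simp only [Finset.mem_filter, Finset.mem_univ, true_and, Finset.mem_singleton]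
    constructor
    · intro hj; by_contra hji; exact hj (hag j hji)
    · intro hj; subst hj; exact hne
  show (univ.filter fun j => y j ≠ x j).card = 1
  rw [hset]; rfl

lemma hd_one_elim {x y : Fin n → Bool} (h : hammingDist y x = 1) :
    ∃ i, y i ≠ x i ∧ ∀ j, j ≠ i → y j = x j := by
  have h' : (univ.filter fun j => y j ≠ x j).card = 1 := h
  obtain ⟨i, hi⟩ := Finset.card_eq_one.mp h'
  refine ⟨i, ?_, ?_⟩
  · have : i ∈ (univ.filter fun j => y j ≠ x j) := by rw [hi]; exact Finset.mem_singleton_self i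
    exact (Finset.mem_filter.mp this).2
  · intro j hj
    by_contra hc
    have : j ∈ (univ.filter fun j => y j ≠ x j) := Finset.mem_filter.mpr ⟨Finset.mem_univ _, hc⟩
    rw [hi, Finset.mem_singleton] at this
    exact hj this

end helpers

/-- For LOZJ with 1 < k < n/2, the set of non-global Pareto local optima is
exactly the set of bit-strings x with LeadingOnes(x) < k and |x|_0 = n - k. -/
theorem LOZJ_local_opts (n k : ℕ) (hk : 1 < k) (hkn : 2 * k < n) (x : Fin n → Bool) :
    nonGlobalParetoLocalOpt leadingOnes (zeroJump n k) x ↔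
      leadingOnes x < k ∧ zerosCount x = n - k := by
  have hLz : leadingOnes x + zerosCount x ≤ n := lead_add_zeros_le x
  have hzle : zerosCount x ≤ n := zeros_le x
  constructor
  · rintro ⟨hnp, hloc⟩
    by_cases hz1 : n - k < zerosCount x
    · exfalso
      by_cases hz2 : zerosCount x = n
      · -- x = 0^n : Pareto optimal
        apply hnp
        rintro y ⟨h1, h2, h3⟩
        rw [zeroJump_eq, zeroJump_eq] at h2 h3
        have hyle := zeros_le y
        by_cases hyn : zerosCount y = n
        · have hxy : y = x := by
            rw [(zeros_eq_n_iff x).mp hz2, (zeros_eq_n_iff y).mp hyn]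
          subst hxy
          omega
        · rw [if_pos (Or.inr hz2)] at h2
          split_ifs at h2 <;> omega
      · -- n-k < z < n : flip a zero to one dominates
        have hzpos : 0 < zerosCount x := by omega
        have hne : (univ.filter fun j => x j = false).Nonempty :=
          Finset.card_pos.mp hzpos
        obtain ⟨i, hi⟩ := hne
        have hxi : x i = false := (Finset.mem_filter.mp hi).2
        set y := Function.update x i true with hy
        have hyi : y i = true := Function.update_self i true x
        have hag : ∀ j, j ≠ i → y j = x j := fun j hj => Function.update_of_ne hj true x
        have hzy : zerosCount y + 1 = zerosCount x := zeros_flip_down hxi hyi hag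
        apply hloc y (hd_one (by rw [hyi, hxi]; simp) hag)
        have hf1 : leadingOnes x ≤ leadingOnes y := by
          apply lead_mono
          intro j hj
          by_cases hji : j = i
          · subst hji; exact hyi
          · rw [hag j hji]; exact hj
        have hf2 : zeroJump n k x < zeroJump n k y := by
          rw [zeroJump_eq, zeroJump_eq]
          have := zeros_le y
          split_ifs <;> omega
        exact ⟨hf1, le_of_lt hf2, Or.inr hf2⟩
    · -- z ≤ n - k
      push_neg at hz1
      by_cases hLz2 : leadingOnes x + zerosCount x = n
      · -- Pareto optimal
        exfalso
        apply hnp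
        rintro y ⟨h1, h2, h3⟩
        have hy1 : leadingOnes y + zerosCount y ≤ n := lead_add_zeros_le y
        have hyle := zeros_le y
        rw [zeroJump_eq, zeroJump_eq] at h2 h3
        split_ifs at h2 h3 <;> omega
      · by_cases hz3 : zerosCount x = n - k
        · exact ⟨by omega, hz3⟩
        · -- z < n - k : flip a one (at position ≥ L) to zero dominates
          exfalso
          have hLn : leadingOnes x < n := by omega
          have key : ∃ i : Fin n, leadingOnes x ≤ (i : ℕ) ∧ x i = true := by
            by_contra hno
            push_neg at hno
            have hsub : (univ.filter fun i => x i = true)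
                ⊆ (univ.filter fun i : Fin n => (i : ℕ) < leadingOnes x) := by
              intro i hi
              simp only [Finset.mem_filter, Finset.mem_univ, true_and] at hi ⊢
              by_contra hc
              push_neg at hc
              exact absurd hi (by simpa using hno i hc)
            have hcard := Finset.card_le_card hsub
            rw [card_filter_lt _ (le_of_lt hLn)] at hcard
            have := ones_add_zeros x
            have : onesCount x ≤ leadingOnes x := hcard
            omega
          obtain ⟨i, hiL, hxi⟩ := key
          set y := Function.update x i false with hy
          have hyi : y i = false := Function.update_self i false x
          have hag : ∀ j, j ≠ i → y j = x j := fun j hj => Function.update_of_ne hj false x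
          have hzy : zerosCount y = zerosCount x + 1 := zeros_flip_up hxi hyi hag
          apply hloc y (hd_one (by rw [hyi, hxi]; simp) hag)
          have hf1 : leadingOnes x ≤ leadingOnes y := by
            apply ge_lead_of y (leadingOnes x) (le_of_lt hLn)
            intro j hj
            have hji : j ≠ i := by
              intro h; subst h; omega
            rw [hag j hji]
            exact lead_true hj
          have hf2 : zeroJump n k x < zeroJump n k y := by
            rw [zeroJump_eq, zeroJump_eq]
            split_ifs <;> omega
          exact ⟨hf1, le_of_lt hf2, Or.inr hf2⟩
  · rintro ⟨hL, hz⟩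
    constructor
    · -- not Pareto optimal: dominated by 1^k 0^(n-k)
      intro hp
      apply hp (fun j : Fin n => decide ((j : ℕ) < k))
      have hkle : k ≤ n := by omega
      have hfilt : (univ.filter fun i : Fin n => ∀ j, j ≤ i → (decide ((j : ℕ) < k)) = true)
          = (univ.filter fun i : Fin n => (i : ℕ) < k) := by
        ext i
        simp only [Finset.mem_filter, Finset.mem_univ, true_and, decide_eq_true_eq]
        constructor
        · intro h; exact h i le_rfl
        · intro h j hj; exact lt_of_le_of_lt hj h
      have hlead : leadingOnes (fun j : Fin n => decide ((j : ℕ) < k)) = k := by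
        rw [leadingOnes, hfilt, card_filter_lt k hkle]
      have hones : onesCount (fun j : Fin n => decide ((j : ℕ) < k)) = k := by
        rw [onesCount]
        have : (univ.filter fun i : Fin n => (decide ((i : ℕ) < k)) = true)
            = (univ.filter fun i : Fin n => (i : ℕ) < k) := by
          ext i; simp
        rw [this, card_filter_lt k hkle]
      have hzeros : zerosCount (fun j : Fin n => decide ((j : ℕ) < k)) = n - k := by
        have := ones_add_zeros (fun j : Fin n => decide ((j : ℕ) < k))
        omega
      refine ⟨by omega, ?_, Or.inl (by omega)⟩
      rw [zeroJump_eq, zeroJump_eq, hzeros, hz, if_pos (Or.inl le_rfl)]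
    · -- no Hamming-1 neighbour dominates
      intro y hd hdom
      obtain ⟨i, hne, hag⟩ := hd_one_elim hd
      obtain ⟨h1, h2, h3⟩ := hdom
      rw [zeroJump_eq, zeroJump_eq] at h2
      cases hxi : x i with
      | true =>
        have hyi : y i = false := by
          revert hne; rw [hxi]; cases y i <;> simp
        have hzy : zerosCount y = zerosCount x + 1 := zeros_flip_up hxi hyi hag
        split_ifs at h2 <;> omega
      | false =>
        have hyi : y i = true := by
          revert hne; rw [hxi]; cases y i <;> simp
        have hzy : zerosCount y + 1 = zerosCount x := zeros_flip_down hxi hyi hag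
        split_ifs at h2 <;> omega
end

section
/- For the bi-objective problem LOZR with f1 = LeadingOnes and f2 = ZeroRoyalRoad on bit-strings of length n = b·ℓ (b > 1, ℓ ≥ 2), a bit-string x is a non-global Pareto local optimum if and only if there exists i ∈ {0, 1, …, b−1} such that: LeadingOnes(x) = i·ℓ (so the first i blocks of x are all-ones), block S_{i+1} of x is all-zeros, no block S_j of x with j > i+1 contains exactly one one-bit, and x is not Pareto optimal (equivalently, some block S_j with j > i+1 is not an all-zeros block). -/
/-!
Let `L = leadingOnes x < n`; bit `L` of `x` is a zero. Flipping it raises LeadingOnes, so at a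
Pareto local optimum it must lower ZeroRoyalRoad: the block containing `L` is all-zeros, and since
the bits before `L` are ones, `L` is the first position of that block. A later block with a single
one-bit could be cleared by one flip that leaves LeadingOnes unchanged and raises ZeroRoyalRoad.

Conversely, under these conditions a flip before `L` lowers LeadingOnes, a flip at `L` destroys the
all-zeros block starting there, and a flip after `L` keeps LeadingOnes but leaves its block with a
one-bit (a later block that is not all-zeros has at least two), so ZeroRoyalRoad cannot increase.
-/

open Finset

theorem hammingDist_eq_one_iff {ι β : Type*} [Fintype ι] [DecidableEq β] {x y : ι → β} :
    hammingDist y x = 1 ↔ ∃ p, y p ≠ x p ∧ ∀ q ≠ p, y q = x q := by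
  simp only [hammingDist, card_eq_one, eq_singleton_iff_unique_mem, mem_filter, mem_univ,
    true_and]
  refine exists_congr fun p => and_congr_right fun _ => forall_congr' fun q => ?_
  rw [not_imp_comm]

theorem hammingDist_update_eq_one {ι β : Type*} [Fintype ι] [DecidableEq ι] [DecidableEq β]
    {x : ι → β} {p : ι} {v : β} (hv : v ≠ x p) :
    hammingDist (Function.update x p v) x = 1 :=
  hammingDist_eq_one_iff.2 ⟨p, by simpa using hv, fun _ hq => Function.update_of_ne hq _ _⟩

def paretoLocalOpt {n : ℕ} (f1 f2 : (Fin n → Bool) → ℕ) (x : Fin n → Bool) : Prop :=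
  ∀ y, hammingDist y x = 1 → ¬ dominates f1 f2 y x

section LeadingOnes

variable {n : ℕ} {x y : Fin n → Bool}

theorem leadingOnes_le (x : Fin n → Bool) : leadingOnes x ≤ n :=
  (card_filter_le _ _).trans (card_fin n).le

theorem lt_leadingOnes_iff (i : Fin n) : (i : ℕ) < leadingOnes x ↔ ∀ j ≤ i, x j = true := by
  constructor
  · intro h
    by_contra hi
    have hsub : univ.filter (fun q : Fin n => ∀ j ≤ q, x j = true) ⊆ Iio i := by
      intro q hq
      simp only [mem_filter, mem_univ, true_and] at hq
      exact mem_Iio.2 (lt_of_not_ge fun hiq => hi fun j hj => hq j (hj.trans hiq))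
    have := card_le_card hsub
    rw [Fin.card_Iio] at this
    exact absurd h (not_lt.2 this)
  · intro h
    have hsub : Iic i ⊆ univ.filter (fun q : Fin n => ∀ j ≤ q, x j = true) := fun q hq =>
      mem_filter.2 ⟨mem_univ q, fun j hj => h j (hj.trans (mem_Iic.1 hq))⟩
    have := card_le_card hsub
    rw [Fin.card_Iic] at this
    exact this

theorem apply_eq_true_of_lt_leadingOnes {q : Fin n} (h : (q : ℕ) < leadingOnes x) :
    x q = true :=
  (lt_leadingOnes_iff q).1 h q le_rfl

theorem leadingOnes_le_of_apply_eq_false {p : Fin n} (h : x p = false) : leadingOnes x ≤ p :=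
  not_lt.1 fun hp => by simp [apply_eq_true_of_lt_leadingOnes hp] at h

theorem apply_leadingOnes_eq_false (hL : leadingOnes x < n) :
    x ⟨leadingOnes x, hL⟩ = false := by
  by_contra h
  refine lt_irrefl (leadingOnes x) ((lt_leadingOnes_iff ⟨_, hL⟩).2 fun j hj => ?_)
  rcases hj.lt_or_eq with hj | rfl
  · exact apply_eq_true_of_lt_leadingOnes hj
  · simpa using h

theorem leadingOnes_eq_of_apply_eq_false {L : ℕ} (hL : L < n)
    (hones : ∀ q : Fin n, (q : ℕ) < L → x q = true) (hzero : x ⟨L, hL⟩ = false) :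
    leadingOnes x = L := by
  refine le_antisymm (leadingOnes_le_of_apply_eq_false hzero) (not_lt.1 fun h => ?_)
  simpa [hones ⟨_, h.trans hL⟩ h] using apply_leadingOnes_eq_false (h.trans hL)

theorem leadingOnes_eq_of_eqOn_of_lt {p : Fin n} (hagree : ∀ q ≠ p, y q = x q)
    (hp : leadingOnes x < p) : leadingOnes y = leadingOnes x := by
  have hL : leadingOnes x < n := hp.trans p.isLt
  refine leadingOnes_eq_of_apply_eq_false hL (fun q hq => ?_) ?_
  · rw [hagree q (Fin.ne_of_val_ne (hq.trans hp).ne)]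
    exact apply_eq_true_of_lt_leadingOnes hq
  · rw [hagree _ (Fin.ne_of_val_ne hp.ne)]
    exact apply_leadingOnes_eq_false hL

theorem eq_true_of_leadingOnes_eq (h : leadingOnes x = n) : x = fun _ => true :=
  funext fun q => apply_eq_true_of_lt_leadingOnes (h.symm ▸ q.isLt)

theorem leadingOnes_lt_of_not_paretoOptimal {f2 : (Fin n → Bool) → ℕ}
    (h : ¬ paretoOptimal leadingOnes f2 x) : leadingOnes x < n := by
  refine (leadingOnes_le x).lt_of_ne fun hx => h fun y ⟨hle, _, hlt⟩ => ?_
  have hy : y = x := by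
    rw [eq_true_of_leadingOnes_eq hx,
      eq_true_of_leadingOnes_eq ((leadingOnes_le y).antisymm (by omega))]
  subst hy
  omega

end LeadingOnes

section Blocks

variable {b ℓ : ℕ} {x y : Fin (b * ℓ) → Bool} {p : Fin (b * ℓ)}

def blockOf (p : Fin (b * ℓ)) : Fin b :=
  ⟨p / ℓ, Nat.div_lt_of_lt_mul (mul_comm b ℓ ▸ p.isLt)⟩

@[simp]
theorem val_blockOf (p : Fin (b * ℓ)) : (blockOf p : ℕ) = p / ℓ :=
  rfl

theorem blockOf_eq_iff {j : Fin b} : blockOf p = j ↔ (p : ℕ) / ℓ = j :=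
  Fin.ext_iff

theorem pos_right_of_fin_mul (p : Fin (b * ℓ)) : 0 < ℓ :=
  Nat.pos_of_mul_pos_left p.pos

theorem mul_lt_of_lt_blockOf {i : ℕ} (h : i < blockOf p) : i * ℓ < p :=
  calc i * ℓ < (i + 1) * ℓ :=
        Nat.mul_lt_mul_of_pos_right (Nat.lt_succ_self i) (pos_right_of_fin_mul p)
    _ ≤ p := (Nat.le_div_iff_mul_le (pos_right_of_fin_mul p)).1 h

theorem le_blockOf_of_mul_le {i : ℕ} (h : i * ℓ ≤ p) : i ≤ blockOf p :=
  (Nat.le_div_iff_mul_le (pos_right_of_fin_mul p)).2 h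

theorem blockOf_of_val_eq_mul {i : Fin b} (h : (p : ℕ) = i * ℓ) : blockOf p = i :=
  Fin.ext (by rw [val_blockOf, h, Nat.mul_div_cancel _ (pos_right_of_fin_mul p)])

theorem blockAllZeros_iff_of_eqOn (hagree : ∀ q ≠ p, x q = y q) {j : Fin b}
    (hj : j ≠ blockOf p) : blockAllZeros b ℓ x j ↔ blockAllZeros b ℓ y j := by
  have hq : ∀ q : Fin (b * ℓ), (q : ℕ) / ℓ = j → x q = y q := fun q hqj =>
    hagree q (by rintro rfl; exact hj (blockOf_eq_iff.2 hqj).symm)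
  exact forall_congr' fun q => imp_congr_right fun hqj => by rw [hq q hqj]

theorem zeroRoyalRoad_le_of_eqOn (hagree : ∀ q ≠ p, x q = y q)
    (hx : ¬ blockAllZeros b ℓ x (blockOf p)) :
    zeroRoyalRoad b ℓ x ≤ zeroRoyalRoad b ℓ y := by
  refine Nat.mul_le_mul_left ℓ (card_le_card fun j hj => ?_)
  simp only [mem_filter, mem_univ, true_and] at hj ⊢
  exact (blockAllZeros_iff_of_eqOn hagree (by rintro rfl; exact hx hj)).1 hj

theorem zeroRoyalRoad_lt_of_eqOn (hagree : ∀ q ≠ p, x q = y q)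
    (hx : ¬ blockAllZeros b ℓ x (blockOf p)) (hy : blockAllZeros b ℓ y (blockOf p)) :
    zeroRoyalRoad b ℓ x < zeroRoyalRoad b ℓ y := by
  refine Nat.mul_lt_mul_of_pos_left (card_lt_card ⟨fun j hj => ?_, fun hsub => ?_⟩)
    (pos_right_of_fin_mul p)
  · simp only [mem_filter, mem_univ, true_and] at hj ⊢
    exact (blockAllZeros_iff_of_eqOn hagree (by rintro rfl; exact hx hj)).1 hj
  · exact hx (mem_filter.1 (hsub (mem_filter.2 ⟨mem_univ _, hy⟩))).2

theorem exists_blockAllZeros_update_of_blockOnes_eq_one {j : Fin b}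
    (h : blockOnes b ℓ x j = 1) :
    ∃ p, blockOf p = j ∧ x p = true ∧ blockAllZeros b ℓ (Function.update x p false) j := by
  obtain ⟨p, hp⟩ := card_eq_one.1 h
  simp only [eq_singleton_iff_unique_mem, mem_filter, mem_univ, true_and] at hp
  obtain ⟨⟨hpj, hpx⟩, huniq⟩ := hp
  refine ⟨p, blockOf_eq_iff.2 hpj, hpx, fun q hqj => ?_⟩
  by_cases hqp : q = p
  · simp [hqp]
  · rw [Function.update_of_ne hqp]
    exact Bool.eq_false_iff.2 fun hq => hqp (huniq q ⟨hqj, hq⟩)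

theorem not_blockAllZeros_of_blockOnes_ne_one (hagree : ∀ q ≠ p, x q = y q) (hx : x p = true)
    (h : blockOnes b ℓ x (blockOf p) ≠ 1) : ¬ blockAllZeros b ℓ y (blockOf p) := by
  have hp : p ∈ univ.filter fun q : Fin (b * ℓ) => (q : ℕ) / ℓ = blockOf p ∧ x q = true :=
    mem_filter.2 ⟨mem_univ p, rfl, hx⟩
  obtain ⟨q, hq, hqp⟩ := exists_mem_ne (lt_of_le_of_ne (card_pos.2 ⟨p, hp⟩) (Ne.symm h)) p
  obtain ⟨hqj, hqx⟩ := (mem_filter.1 hq).2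
  intro hzero
  simpa [← hagree q hqp, hqx] using hzero q hqj

end Blocks

section LOZR

variable {b ℓ : ℕ} {x : Fin (b * ℓ) → Bool}

theorem exists_leadingOnes_eq_mul_of_paretoLocalOpt
    (hloc : paretoLocalOpt leadingOnes (zeroRoyalRoad b ℓ) x) (hL : leadingOnes x < b * ℓ) :
    ∃ i : Fin b, leadingOnes x = i * ℓ ∧ blockAllZeros b ℓ x i := by
  set pL : Fin (b * ℓ) := ⟨leadingOnes x, hL⟩
  set y := Function.update x pL true
  have hagree : ∀ q ≠ pL, x q = y q := fun q hq => (Function.update_of_ne hq _ _).symm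
  have hLO : leadingOnes x < leadingOnes y := (lt_leadingOnes_iff pL).2 fun j hj => by
    rcases hj.lt_or_eq with hj | rfl
    · rw [← hagree j hj.ne]
      exact apply_eq_true_of_lt_leadingOnes hj
    · exact Function.update_self _ _ _
  have hzero : blockAllZeros b ℓ x (blockOf pL) := by
    by_contra hz
    refine hloc y (hammingDist_update_eq_one ?_)
      ⟨hLO.le, zeroRoyalRoad_le_of_eqOn hagree hz, Or.inl hLO⟩
    simpa using apply_leadingOnes_eq_false hL
  refine ⟨blockOf pL, le_antisymm (not_lt.1 fun h => ?_) (Nat.div_mul_le_self _ _), hzero⟩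
  -- the first position of the block is a zero, but every position before `pL` is a one
  set s : Fin (b * ℓ) := ⟨blockOf pL * ℓ, (Nat.div_mul_le_self _ _).trans_lt hL⟩
  simpa [apply_eq_true_of_lt_leadingOnes (q := s) h] using
    hzero s (blockOf_eq_iff.1 (blockOf_of_val_eq_mul rfl))

theorem blockOnes_ne_one_of_paretoLocalOpt
    (hloc : paretoLocalOpt leadingOnes (zeroRoyalRoad b ℓ) x) {i j : Fin b}
    (hL : leadingOnes x = i * ℓ) (hij : i < j) : blockOnes b ℓ x j ≠ 1 := by
  intro h
  obtain ⟨p, rfl, hp, hzero⟩ := exists_blockAllZeros_update_of_blockOnes_eq_one h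
  set z := Function.update x p false
  have hagree : ∀ q ≠ p, x q = z q := fun q hq => (Function.update_of_ne hq _ _).symm
  have hLO : leadingOnes z = leadingOnes x :=
    leadingOnes_eq_of_eqOn_of_lt (fun q hq => (hagree q hq).symm) (hL ▸ mul_lt_of_lt_blockOf hij)
  have hZR := zeroRoyalRoad_lt_of_eqOn hagree (fun h0 => by simp [h0 p rfl] at hp) hzero
  exact hloc z (hammingDist_update_eq_one (by simp [hp])) ⟨hLO.ge, hZR.le, Or.inr hZR⟩

theorem paretoLocalOpt_of_blockOnes_ne_one {i : Fin b} (hL : leadingOnes x = i * ℓ)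
    (hzero : blockAllZeros b ℓ x i) (hone : ∀ j, i < j → blockOnes b ℓ x j ≠ 1) :
    paretoLocalOpt leadingOnes (zeroRoyalRoad b ℓ) x := by
  intro y hy ⟨hLO, hZR, hstrict⟩
  obtain ⟨p, hne, hagree⟩ := hammingDist_eq_one_iff.1 hy
  rcases lt_trichotomy (p : ℕ) (leadingOnes x) with hp | hp | hp
  · have hyp : y p = false := by simpa [apply_eq_true_of_lt_leadingOnes hp] using hne
    have := leadingOnes_le_of_apply_eq_false hyp
    omega
  · have hi : blockOf p = i := blockOf_of_val_eq_mul (hp.trans hL)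
    have hyp : y p = true := by simpa [hzero p (blockOf_eq_iff.1 hi)] using hne
    have := zeroRoyalRoad_lt_of_eqOn hagree (fun h => by simp [h p rfl] at hyp) (hi ▸ hzero)
    omega
  · have hLO' := leadingOnes_eq_of_eqOn_of_lt hagree hp
    have hnz : ¬ blockAllZeros b ℓ y (blockOf p) := by
      cases hyp : y p
      · have hxp : x p = true := by simpa [hyp] using hne.symm
        have hi : i < blockOf p := lt_of_le_of_ne (le_blockOf_of_mul_le (hL ▸ hp.le))
          fun h => by simp [hzero p (blockOf_eq_iff.1 h.symm)] at hxp
        exact not_blockAllZeros_of_blockOnes_ne_one (fun q hq => (hagree q hq).symm) hxp (hone _ hi)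
      · exact fun h => by simp [h p rfl] at hyp
    have := zeroRoyalRoad_le_of_eqOn hagree hnz
    omega

end LOZR

theorem LOZR_local_opts_general (b ℓ : ℕ) (x : Fin (b * ℓ) → Bool) :
    nonGlobalParetoLocalOpt leadingOnes (zeroRoyalRoad b ℓ) x ↔
      ∃ i : Fin b, leadingOnes x = (i : ℕ) * ℓ ∧
        blockAllZeros b ℓ x i ∧
        (∀ j : Fin b, i < j → blockOnes b ℓ x j ≠ 1) ∧
        ¬ paretoOptimal leadingOnes (zeroRoyalRoad b ℓ) x := by
  constructor
  · rintro ⟨hnp, hloc⟩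
    obtain ⟨i, hL, hzero⟩ :=
      exists_leadingOnes_eq_mul_of_paretoLocalOpt hloc (leadingOnes_lt_of_not_paretoOptimal hnp)
    exact ⟨i, hL, hzero, fun j => blockOnes_ne_one_of_paretoLocalOpt hloc hL, hnp⟩
  · rintro ⟨i, hL, hzero, hone, hnp⟩
    exact ⟨hnp, paretoLocalOpt_of_blockOnes_ne_one hL hzero hone⟩

/-- For LOZR with b > 1 and ℓ ≥ 2: x is a non-global Pareto local optimum iff
there is i ∈ {0,…,b-1} such that LeadingOnes(x) = i·ℓ, block i (0-indexed, i.e. S_{i+1}) is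
all-zeros, no later block contains exactly one one-bit, and x is not Pareto optimal. -/
theorem LOZR_local_opts (b ℓ : ℕ) (hb : 1 < b) (hℓ : 2 ≤ ℓ) (x : Fin (b * ℓ) → Bool) :
    nonGlobalParetoLocalOpt leadingOnes (zeroRoyalRoad b ℓ) x ↔
      ∃ i : Fin b, leadingOnes x = (i : ℕ) * ℓ ∧
        blockAllZeros b ℓ x i ∧
        (∀ j : Fin b, i < j → blockOnes b ℓ x j ≠ 1) ∧
        ¬ paretoOptimal leadingOnes (zeroRoyalRoad b ℓ) x :=
  LOZR_local_opts_general b ℓ x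
end

section
/- For the bi-objective problem OJZR with f1 = OneJump_k and f2 = ZeroRoyalRoad on bit-strings of length n = b·ℓ, where b > 1, k is an integer with 1 < k < n/2 and ℓ < k, and (n−k) mod ℓ = 0, the Pareto set equals exactly {1^n} ∪ { x : |x|_1 ≤ n−k and every block of x is an all-ones block or an all-zeros block }. -/
open Finset

/-!
Summing block by block, `|x|₁ + ZeroRoyalRoad x ≤ n`, with equality exactly when every block
is all-ones or all-zeros. Hence `OneJump_k x + ZeroRoyalRoad x ≤ n + k` for every `x`: below the
gap `OneJump_k x = k + |x|₁`, inside the gap both objectives are below `k`, and `1ⁿ` scores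
`(n + k, 0)`. Equality holds exactly on the claimed set, so its points are Pareto optimal.
Conversely, if `x` has `z` all-zero blocks and lies strictly below the line, the string whose
first `min (b - z) ((n - k) / ℓ)` blocks are ones and whose other blocks are zeros dominates `x`;
since `ℓ ∣ n - k`, it is not in the gap.
-/

lemma paretoOptimal_of_forall_add_le {n : ℕ} {f₁ f₂ : (Fin n → Bool) → ℕ} {x : Fin n → Bool}
    (h : ∀ y, f₁ y + f₂ y ≤ f₁ x + f₂ x) : paretoOptimal f₁ f₂ x := by
  rintro y ⟨h₁, h₂, h₁₂⟩
  have := h y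
  omega

section OnesCount

variable {n : ℕ}

lemma onesCount_le (w : Fin n → Bool) : onesCount w ≤ n := by
  simpa [onesCount] using Finset.card_filter_le Finset.univ fun i => w i = true

lemma onesCount_eq_iff (w : Fin n → Bool) : onesCount w = n ↔ w = fun _ => true := by
  simpa [onesCount, funext_iff] using
    Finset.card_filter_eq_iff (s := Finset.univ) (p := fun i => w i = true)

lemma onesCount_false : onesCount (fun _ : Fin n => false) = 0 := by
  simp [onesCount]

lemma onesCount_true : onesCount (fun _ : Fin n => true) = n := by
  simp [onesCount]

/-- The contribution of one block to `onesCount + zeroRoyalRoad`. -/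
lemma onesCount_add_ite_le (w : Fin n → Bool) :
    onesCount w + (if w = (fun _ => false) then n else 0) ≤ n := by
  split_ifs with hw
  · simp [hw, onesCount_false]
  · simpa using onesCount_le w

lemma onesCount_add_ite_eq_iff (w : Fin n → Bool) :
    onesCount w + (if w = (fun _ => false) then n else 0) = n ↔
      w = (fun _ => true) ∨ w = (fun _ => false) := by
  split_ifs with hw
  · simp [hw, onesCount_false]
  · simp [hw, onesCount_eq_iff]

end OnesCount

section Blocks

variable {b ℓ : ℕ}

/-- Position `r` of block `j` is bit `j * ℓ + r`. -/
def block (x : Fin (b * ℓ) → Bool) (j : Fin b) : Fin ℓ → Bool :=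
  fun r => x (finProdFinEquiv (j, r))

lemma forall_of_div_eq_iff_forall_block (P : Bool → Prop) (x : Fin (b * ℓ) → Bool) (j : Fin b) :
    (∀ i : Fin (b * ℓ), (i : ℕ) / ℓ = j → P (x i)) ↔ ∀ r, P (block x j r) := by
  constructor
  · intro h r
    apply h
    have hj : (finProdFinEquiv.symm (finProdFinEquiv (j, r))).1 = j := by
      rw [Equiv.symm_apply_apply]
    rwa [finProdFinEquiv_symm_apply, Fin.ext_iff, Fin.coe_divNat] at hj
  · intro h i hi
    have hi' : i.divNat = j := Fin.ext (by rw [Fin.coe_divNat, hi])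
    simpa [block, ← hi', ← finProdFinEquiv_symm_apply] using h i.modNat

lemma blockAllOnes_iff (x : Fin (b * ℓ) → Bool) (j : Fin b) :
    blockAllOnes b ℓ x j ↔ block x j = fun _ => true :=
  (forall_of_div_eq_iff_forall_block (· = true) x j).trans funext_iff.symm

lemma blockAllZeros_iff (x : Fin (b * ℓ) → Bool) (j : Fin b) :
    blockAllZeros b ℓ x j ↔ block x j = fun _ => false :=
  (forall_of_div_eq_iff_forall_block (· = false) x j).trans funext_iff.symm

lemma onesCount_eq_sum_block (x : Fin (b * ℓ) → Bool) :
    onesCount x = ∑ j, onesCount (block x j) := by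
  simp only [onesCount, Finset.card_filter]
  rw [← finProdFinEquiv.sum_comp, Fintype.sum_prod_type]
  rfl

lemma zeroRoyalRoad_eq_sum_block (x : Fin (b * ℓ) → Bool) :
    zeroRoyalRoad b ℓ x = ∑ j, if block x j = (fun _ => false) then ℓ else 0 := by
  rw [zeroRoyalRoad, Finset.card_filter, Finset.mul_sum]
  simp only [blockAllZeros_iff, mul_ite, mul_one, mul_zero]

lemma onesCount_add_zeroRoyalRoad (x : Fin (b * ℓ) → Bool) :
    onesCount x + zeroRoyalRoad b ℓ x =
      ∑ j, (onesCount (block x j) + if block x j = (fun _ => false) then ℓ else 0) := by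
  rw [onesCount_eq_sum_block, zeroRoyalRoad_eq_sum_block, Finset.sum_add_distrib]

lemma onesCount_add_zeroRoyalRoad_le (x : Fin (b * ℓ) → Bool) :
    onesCount x + zeroRoyalRoad b ℓ x ≤ b * ℓ := by
  rw [onesCount_add_zeroRoyalRoad]
  exact (Finset.sum_le_sum fun j _ => onesCount_add_ite_le (block x j)).trans_eq (by simp)

lemma onesCount_add_zeroRoyalRoad_eq_iff (x : Fin (b * ℓ) → Bool) :
    onesCount x + zeroRoyalRoad b ℓ x = b * ℓ ↔
      ∀ j, blockAllOnes b ℓ x j ∨ blockAllZeros b ℓ x j := by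
  have hconst : ∑ _j : Fin b, ℓ = b * ℓ := by simp
  rw [onesCount_add_zeroRoyalRoad, ← hconst,
    Finset.sum_eq_sum_iff_of_le fun j _ => onesCount_add_ite_le (block x j)]
  simp only [Finset.mem_univ, true_imp_iff, onesCount_add_ite_eq_iff, blockAllOnes_iff,
    blockAllZeros_iff]

def blockPrefix (b ℓ p : ℕ) : Fin (b * ℓ) → Bool := fun i => decide ((i : ℕ) < p * ℓ)

lemma onesCount_blockPrefix {p : ℕ} (hp : p ≤ b) : onesCount (blockPrefix b ℓ p) = p * ℓ := by
  simp [onesCount, blockPrefix, Fin.card_filter_val_lt, Nat.mul_le_mul_right ℓ hp]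

lemma blockPrefix_monochrome (p : ℕ) (j : Fin b) :
    blockAllOnes b ℓ (blockPrefix b ℓ p) j ∨ blockAllZeros b ℓ (blockPrefix b ℓ p) j := by
  have hblock : ∀ i : Fin (b * ℓ), (i : ℕ) / ℓ = j →
      blockPrefix b ℓ p i = decide ((j : ℕ) < p) := by
    intro i hi
    have hℓ : 0 < ℓ := Nat.pos_of_mul_pos_left (Nat.zero_lt_of_lt i.isLt)
    simp [blockPrefix, ← Nat.div_lt_iff_lt_mul hℓ, hi]
  by_cases hj : (j : ℕ) < p
  · exact Or.inl fun i hi => by simp [hblock i hi, hj]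
  · exact Or.inr fun i hi => by simp [hblock i hi, hj]

lemma zeroRoyalRoad_blockPrefix {p : ℕ} (hp : p ≤ b) :
    zeroRoyalRoad b ℓ (blockPrefix b ℓ p) = (b - p) * ℓ := by
  have h := (onesCount_add_zeroRoyalRoad_eq_iff (blockPrefix b ℓ p)).mpr
    (blockPrefix_monochrome p)
  rw [onesCount_blockPrefix hp] at h
  rw [Nat.sub_mul]
  omega

end Blocks

section OneJump

variable {n k : ℕ}

lemma oneJump_of_le (x : Fin n → Bool) (hx : onesCount x ≤ n - k) :
    oneJump n k x = k + onesCount x :=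
  if_pos (Or.inl hx)

lemma oneJump_of_lt (x : Fin n → Bool) (hx : n - k < onesCount x) (hx1 : x ≠ fun _ => true) :
    oneJump n k x = n - onesCount x :=
  if_neg (not_or.mpr ⟨by omega, hx1⟩)

lemma oneJump_true : oneJump n k (fun _ => true) = k + n := by
  rw [oneJump, if_pos (Or.inr rfl), onesCount_true]

lemma oneJump_le_of_ne (hk : k ≤ n) (x : Fin n → Bool) (hx : x ≠ fun _ => true) :
    oneJump n k x ≤ n := by
  by_cases h : onesCount x ≤ n - k
  · rw [oneJump_of_le x h]; omega
  · rw [oneJump_of_lt x (by omega) hx]; omega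

end OneJump

section OJZR

variable {b ℓ k : ℕ}

lemma oneJump_blockPrefix {p : ℕ} (hp : p * ℓ ≤ b * ℓ - k) (hpb : p ≤ b) :
    oneJump (b * ℓ) k (blockPrefix b ℓ p) = k + p * ℓ := by
  rw [oneJump_of_le _ (by rwa [onesCount_blockPrefix hpb]), onesCount_blockPrefix hpb]

lemma oneJump_add_zeroRoyalRoad_le (hk : k ≤ b * ℓ) (x : Fin (b * ℓ) → Bool) :
    oneJump (b * ℓ) k x + zeroRoyalRoad b ℓ x ≤ b * ℓ + k := by
  have hsum := onesCount_add_zeroRoyalRoad_le x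
  by_cases hx1 : x = fun _ => true
  · subst hx1
    rw [oneJump_true]
    have := onesCount_true (n := b * ℓ)
    omega
  by_cases hx : onesCount x ≤ b * ℓ - k
  · rw [oneJump_of_le x hx]; omega
  · rw [oneJump_of_lt x (by omega) hx1]; omega

lemma oneJump_add_zeroRoyalRoad_eq_iff (hk : k ≤ b * ℓ) (x : Fin (b * ℓ) → Bool) :
    oneJump (b * ℓ) k x + zeroRoyalRoad b ℓ x = b * ℓ + k ↔
      x = (fun _ => true) ∨
        (onesCount x ≤ b * ℓ - k ∧ ∀ j, blockAllOnes b ℓ x j ∨ blockAllZeros b ℓ x j) := by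
  have hsum := onesCount_add_zeroRoyalRoad_le x
  by_cases hx1 : x = fun _ => true
  · subst hx1
    have := onesCount_true (n := b * ℓ)
    simp only [true_or, iff_true, oneJump_true]
    omega
  by_cases hx : onesCount x ≤ b * ℓ - k
  · rw [oneJump_of_le x hx, ← onesCount_add_zeroRoyalRoad_eq_iff]
    simp only [hx1, hx, false_or, true_and]
    omega
  · rw [oneJump_of_lt x (by omega) hx1]
    simp only [hx1, hx, false_or, false_and, iff_false]
    omega

lemma exists_dominates_of_add_lt (hk : k ≤ b * ℓ) (hmod : ℓ ∣ b * ℓ - k)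
    (x : Fin (b * ℓ) → Bool) (hx : oneJump (b * ℓ) k x + zeroRoyalRoad b ℓ x < b * ℓ + k) :
    ∃ y, dominates (oneJump (b * ℓ) k) (zeroRoyalRoad b ℓ) y x := by
  have hx1 : x ≠ fun _ => true := by
    rintro rfl
    rw [oneJump_true] at hx
    omega
  have hf1 := oneJump_le_of_ne hk x hx1
  have hℓ : 0 < ℓ := Nat.pos_of_ne_zero (by rintro rfl; simp at hx hf1; omega)
  obtain ⟨z, hz, hzb⟩ : ∃ z, zeroRoyalRoad b ℓ x = z * ℓ ∧ z ≤ b :=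
    ⟨_, mul_comm _ _, (Finset.card_filter_le _ _).trans_eq (by simp)⟩
  obtain ⟨m, hm⟩ : ∃ m, b * ℓ - k = m * ℓ := by
    obtain ⟨m, hm⟩ := hmod
    exact ⟨m, hm.trans (mul_comm _ _)⟩
  have hmb : m ≤ b := Nat.le_of_mul_le_mul_right (hm ▸ Nat.sub_le _ _) hℓ
  by_cases hzm : b - z ≤ m
  · have hbz : (b - z) * ℓ + z * ℓ = b * ℓ := by rw [← Nat.add_mul, Nat.sub_add_cancel hzb]
    have hp : (b - z) * ℓ ≤ b * ℓ - k := hm ▸ Nat.mul_le_mul_right ℓ hzm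
    refine ⟨blockPrefix b ℓ (b - z), ?_⟩
    rw [dominates, oneJump_blockPrefix hp (Nat.sub_le b z),
      zeroRoyalRoad_blockPrefix (Nat.sub_le b z), Nat.sub_sub_self hzb]
    omega
  · have hmz : z * ℓ < (b - m) * ℓ := Nat.mul_lt_mul_of_pos_right (by omega) hℓ
    refine ⟨blockPrefix b ℓ m, ?_⟩
    rw [dominates, oneJump_blockPrefix hm.ge hmb, zeroRoyalRoad_blockPrefix hmb]
    omega

end OJZR

theorem OJZR_pareto_set_div_general (b ℓ k : ℕ) (hkn : 2 * k < b * ℓ)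
    (hmod : (b * ℓ - k) % ℓ = 0) (x : Fin (b * ℓ) → Bool) :
    paretoOptimal (oneJump (b * ℓ) k) (zeroRoyalRoad b ℓ) x ↔
      x = (fun _ => true) ∨
        (onesCount x ≤ b * ℓ - k ∧
          ∀ j : Fin b, blockAllOnes b ℓ x j ∨ blockAllZeros b ℓ x j) := by
  have hk : k ≤ b * ℓ := by omega
  rw [← oneJump_add_zeroRoyalRoad_eq_iff hk]
  constructor
  · intro hx
    by_contra hne
    obtain ⟨y, hy⟩ := exists_dominates_of_add_lt hk (Nat.dvd_of_mod_eq_zero hmod) x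
      ((oneJump_add_zeroRoyalRoad_le hk x).lt_of_ne hne)
    exact hx y hy
  · intro hx
    exact paretoOptimal_of_forall_add_le fun y => hx ▸ oneJump_add_zeroRoyalRoad_le hk y

/-- For OJZR (f1 = OneJump_k, f2 = ZeroRoyalRoad) on bit-strings of length
n = b·ℓ with b > 1, 1 < k < n/2, ℓ < k and (n-k) mod ℓ = 0, the Pareto set is exactly
{1^n} ∪ { x : |x|_1 ≤ n-k and every block of x is all-ones or all-zeros }. -/
theorem OJZR_pareto_set_div (b ℓ k : ℕ) (hb : 1 < b) (hk : 1 < k) (hkn : 2 * k < b * ℓ)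
    (hℓk : ℓ < k) (hmod : (b * ℓ - k) % ℓ = 0) (x : Fin (b * ℓ) → Bool) :
    paretoOptimal (oneJump (b * ℓ) k) (zeroRoyalRoad b ℓ) x ↔
      x = (fun _ => true) ∨
        (onesCount x ≤ b * ℓ - k ∧
          ∀ j : Fin b, blockAllOnes b ℓ x j ∨ blockAllZeros b ℓ x j) :=
  OJZR_pareto_set_div_general b ℓ k hkn hmod x
end

section
/- For the bi-objective problem OMZJ with f1 = OneMax and f2 = ZeroJump_k on bit-strings of length n, where k is an integer with 1 < k < n/2, the Pareto set equals exactly {0^n} ∪ { x : |x|_0 ≤ n−k }. -/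
open Finset

/-!
Off the gap `n - k < |x|_0 < n` we have `ZeroJump_k(x) = k + |x|_0`, while `ZeroJump_k ≤ k + |y|_0`
for every `y`. As `OneMax + |·|_0 = n`, a `y` with at least as many one-bits as `x` has at most as
many zero-bits, so it can improve neither objective strictly. Inside the gap, flipping a zero-bit
gains a one-bit and does not decrease `ZeroJump_k`.
-/

open Finset

theorem onesCount_add_zerosCount {n : ℕ} (x : Fin n → Bool) :
    onesCount x + zerosCount x = n := by
  simpa [onesCount, zerosCount] using
    card_filter_add_card_filter_not (s := (univ : Finset (Fin n))) (fun i => x i = true)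

theorem onesCount_update_true {n : ℕ} {x : Fin n → Bool} {i : Fin n} (hi : x i = false) :
    onesCount (Function.update x i true) = onesCount x + 1 := by
  have h : univ.filter (fun j => Function.update x i true j = true)
      = insert i (univ.filter fun j => x j = true) := by
    ext j
    by_cases h : j = i <;> simp [h, Function.update_apply]
  rw [onesCount, h, card_insert_of_notMem (by simp [hi]), onesCount]

section ZeroJump

variable {n : ℕ} (k : ℕ) {x : Fin n → Bool}

theorem zeroJump_of_not_gap (h : x = (fun _ => false) ∨ zerosCount x ≤ n - k) :
    zeroJump n k x = k + zerosCount x := by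
  rw [zeroJump, if_pos h.symm]

theorem zeroJump_of_gap (hx : x ≠ fun _ => false) (hz : n - k < zerosCount x) :
    zeroJump n k x = n - zerosCount x := by
  rw [zeroJump, if_neg (not_or.mpr ⟨by omega, hx⟩)]

theorem zeroJump_le_add_zerosCount (y : Fin n → Bool) : zeroJump n k y ≤ k + zerosCount y := by
  unfold zeroJump
  split_ifs <;> omega

theorem paretoOptimal_of_zeroJump_eq (h : zeroJump n k x = k + zerosCount x) :
    paretoOptimal onesCount (zeroJump n k) x := by
  rintro y ⟨hones, hjump, hstrict⟩
  have hsum : onesCount y + zerosCount y = onesCount x + zerosCount x := by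
    rw [onesCount_add_zerosCount, onesCount_add_zerosCount]
  have := zeroJump_le_add_zerosCount k y
  omega

theorem not_paretoOptimal_of_gap (hx : x ≠ fun _ => false) (hz : n - k < zerosCount x) :
    ¬ paretoOptimal onesCount (zeroJump n k) x := by
  obtain ⟨i, hi⟩ := card_pos.mp (show 0 < zerosCount x by omega)
  replace hi : x i = false := (mem_filter.mp hi).2
  set y := Function.update x i true
  have hones : onesCount y = onesCount x + 1 := onesCount_update_true hi
  have hsum : onesCount y + zerosCount y = onesCount x + zerosCount x := by
    rw [onesCount_add_zerosCount, onesCount_add_zerosCount]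
  -- if `y` leaves the gap, then `k + |y|_0 = k + |x|_0 - 1 ≥ n`
  have hjump : zeroJump n k x ≤ zeroJump n k y := by
    rw [zeroJump_of_gap k hx hz, zeroJump]
    split_ifs <;> omega
  exact fun hpo => hpo y ⟨by omega, hjump, Or.inl (by omega)⟩

end ZeroJump

theorem OMZJ_pareto_set_general (n k : ℕ) (x : Fin n → Bool) :
    paretoOptimal onesCount (zeroJump n k) x ↔
      x = (fun _ => false) ∨ zerosCount x ≤ n - k := by
  refine ⟨fun hpo => ?_, fun h => paretoOptimal_of_zeroJump_eq k (zeroJump_of_not_gap k h)⟩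
  by_contra! h
  exact not_paretoOptimal_of_gap k h.1 h.2 hpo

/-- For OMZJ (f1 = OneMax, f2 = ZeroJump_k) with 1 < k < n/2, the Pareto set is
exactly {0^n} ∪ { x : |x|_0 ≤ n-k }. -/
theorem OMZJ_pareto_set (n k : ℕ) (hk : 1 < k) (hkn : 2 * k < n) (x : Fin n → Bool) :
    paretoOptimal onesCount (zeroJump n k) x ↔
      x = (fun _ => false) ∨ zerosCount x ≤ n - k :=
  OMZJ_pareto_set_general n k x
end
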